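/- arXiv:2109.08414 — 7 statements merged into one kernel-verified Lean document; each statement's English description precedes it below -/
import Mathlib

section
/- A proper hyperideal I of R is α-prime if and only if for all hyperideals I₁, I₂ of R, I₁ ∘ I₂ ⊆ I implies I₁ ⊆ I or α(I₂) ⊆ I. -/
open Pointwise

namespace HyperPaper

/-- A commutative multiplicative hyperring on an additive commutative group:
the hypermultiplication is associative, commutative, subdistributive over `+`,
and compatible with negation. -/
structure MulHyperring (R : Type*) [AddCommGroup R] where
  hmul : R → R → Set R
  nonempty : ∀ a b, (hmul a b).Nonempty
  comm : ∀ a b, hmul a b = hmul b a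
  assoc : ∀ a b c, (⋃ t ∈ hmul a b, hmul t c) = ⋃ t ∈ hmul b c, hmul a t
  distrib : ∀ a b c, hmul a (b + c) ⊆ hmul a b + hmul a c
  hmul_neg : ∀ a b, hmul a (-b) = -(hmul a b)

variable {R : Type*} [AddCommGroup R]

/-- Product of two subsets under the hyperoperation. -/
def MulHyperring.setMul (H : MulHyperring R) (A B : Set R) : Set R :=
  ⋃ a ∈ A, ⋃ b ∈ B, H.hmul a b

/-- `H.hpow a n` is the `(n+1)`-fold hyperproduct `a ∘ a ∘ ⋯ ∘ a`. -/
def MulHyperring.hpow (H : MulHyperring R) (a : R) : ℕ → Set R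
  | 0 => {a}
  | n + 1 => H.setMul {a} (H.hpow a n)

/-- `H.hprod a l` is the hyperproduct of the list `a :: l`. -/
def MulHyperring.hprod (H : MulHyperring R) (a : R) : List R → Set R
  | [] => {a}
  | b :: l => H.setMul {a} (H.hprod b l)

/-- A hyperideal: an additive subgroup absorbing hypermultiplication. -/
structure Hyperideal (H : MulHyperring R) where
  carrier : Set R
  zero_mem : (0 : R) ∈ carrier
  sub_mem : ∀ a b, a ∈ carrier → b ∈ carrier → a - b ∈ carrier
  absorb : ∀ r x, x ∈ carrier → H.hmul r x ⊆ carrier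

/-- A C-hyperideal: any finite hyperproduct meeting it is contained in it. -/
def IsCHyperideal (H : MulHyperring R) (I : Hyperideal H) : Prop :=
  ∀ a (l : List R), (H.hprod a l ∩ I.carrier).Nonempty → H.hprod a l ⊆ I.carrier

/-- A good homomorphism between multiplicative hyperrings. -/
def IsGoodHom {R₁ R₂ : Type*} [AddCommGroup R₁] [AddCommGroup R₂]
    (H₁ : MulHyperring R₁) (H₂ : MulHyperring R₂) (f : R₁ → R₂) : Prop :=
  (∀ x y, f (x + y) = f x + f y) ∧ ∀ x y, f '' H₁.hmul x y = H₂.hmul (f x) (f y)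

/-- A good endomorphism. -/
def IsGoodEndo (H : MulHyperring R) (α : R → R) : Prop :=
  IsGoodHom H H α

/-- A proper hyperideal `I` is `α`-prime if `x ∘ y ⊆ I` implies `x ∈ I` or `α y ∈ I`. -/
def IsAlphaPrime (H : MulHyperring R) (α : R → R) (I : Hyperideal H) : Prop :=
  I.carrier ≠ Set.univ ∧
    ∀ x y, H.hmul x y ⊆ I.carrier → x ∈ I.carrier ∨ α y ∈ I.carrier

/-- A proper hyperideal `I` is prime if `x ∘ y ⊆ I` implies `x ∈ I` or `y ∈ I`. -/
def IsPrime (H : MulHyperring R) (I : Hyperideal H) : Prop :=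
  I.carrier ≠ Set.univ ∧
    ∀ x y, H.hmul x y ⊆ I.carrier → x ∈ I.carrier ∨ y ∈ I.carrier

/-- The radical `√S = {r | rⁿ ⊆ S for some n}`. -/
def radical (H : MulHyperring R) (S : Set R) : Set R :=
  {r | ∃ n : ℕ, H.hpow r n ⊆ S}

/-- The `α`-radical `ᵅ√S = {r | α(rⁿ) ⊆ S for some n}`. -/
def alphaRad (H : MulHyperring R) (α : R → R) (S : Set R) : Set R :=
  {r | ∃ n : ℕ, α '' H.hpow r n ⊆ S}

/-- The set of `α`-nilpotent elements. -/
def nilAlpha (H : MulHyperring R) (α : R → R) : Set R :=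
  {x | ∃ n : ℕ, (0 : R) ∈ α '' H.hpow x n}

/-- The `n`-fold set power of a hyperideal carrier: `idealPow H S n = S^(n+1)`. -/
def idealPow (H : MulHyperring R) (S : Set R) : ℕ → Set R
  | 0 => S
  | n + 1 => H.setMul S (idealPow H S n)

end HyperPaper

open HyperPaper

/-! The forward direction is elementwise. For the converse, given `x ∘ y ⊆ I`, apply the
hypothesis to the colon hyperideals `I₁ = (I : y)`, which contains `x`, and `I₂ = (I : I₁)`,
which contains `y` by commutativity; their product lies in `I` by construction. -/

namespace HyperPaper

variable {R : Type*} [AddCommGroup R] {H : MulHyperring R}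

theorem MulHyperring.setMul_subset_iff {A B S : Set R} :
    H.setMul A B ⊆ S ↔ ∀ a ∈ A, ∀ b ∈ B, H.hmul a b ⊆ S := by
  simp only [MulHyperring.setMul, Set.iUnion₂_subset_iff]

namespace Hyperideal

variable (I : Hyperideal H)

theorem hmul_sub_subset {y a b : R} (ha : H.hmul y a ⊆ I.carrier)
    (hb : H.hmul y b ⊆ I.carrier) : H.hmul y (a - b) ⊆ I.carrier := by
  intro z hz
  have hz' : z ∈ H.hmul y a + -H.hmul y b := by
    rw [← H.hmul_neg]
    exact H.distrib y a (-b) (by rwa [← sub_eq_add_neg])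
  obtain ⟨u, hu, v, hv, rfl⟩ := hz'
  simpa using I.sub_mem u (-v) (ha hu) (hb hv)

theorem hmul_subset_of_mem_hmul {r a t s : R} (ht : t ∈ H.hmul r a)
    (has : H.hmul a s ⊆ I.carrier) : H.hmul t s ⊆ I.carrier := by
  intro z hz
  have hz' : z ∈ ⋃ t ∈ H.hmul r a, H.hmul t s := Set.mem_iUnion₂.mpr ⟨t, ht, hz⟩
  rw [H.assoc] at hz'
  obtain ⟨u, hu, hzu⟩ := Set.mem_iUnion₂.mp hz'
  exact I.absorb r u (has hu) hzu

def colon (S : Set R) : Hyperideal H where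
  carrier := {a | ∀ s ∈ S, H.hmul a s ⊆ I.carrier}
  zero_mem s _ := by
    rw [H.comm]
    exact I.absorb s 0 I.zero_mem
  sub_mem a b ha hb s hs := by
    rw [H.comm]
    exact I.hmul_sub_subset (H.comm s a ▸ ha s hs) (H.comm s b ▸ hb s hs)
  absorb _ _ ha _ ht s hs := I.hmul_subset_of_mem_hmul ht (ha s hs)

end Hyperideal

variable {α : R → R} {I : Hyperideal H}

theorem IsAlphaPrime.setMul_subset_imp (hI : IsAlphaPrime H α I) (I₁ I₂ : Hyperideal H)
    (h : H.setMul I₁.carrier I₂.carrier ⊆ I.carrier) :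
    I₁.carrier ⊆ I.carrier ∨ α '' I₂.carrier ⊆ I.carrier := by
  refine or_iff_not_imp_left.mpr fun h₁ => ?_
  obtain ⟨x, hx₁, hxI⟩ := Set.not_subset.mp h₁
  rintro _ ⟨y, hy₂, rfl⟩
  exact (hI.2 x y (MulHyperring.setMul_subset_iff.mp h x hx₁ y hy₂)).resolve_left hxI

theorem isAlphaPrime_of_setMul_subset_imp (hproper : I.carrier ≠ Set.univ)
    (h : ∀ I₁ I₂ : Hyperideal H, H.setMul I₁.carrier I₂.carrier ⊆ I.carrier →
      I₁.carrier ⊆ I.carrier ∨ α '' I₂.carrier ⊆ I.carrier) :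
    IsAlphaPrime H α I := by
  refine ⟨hproper, fun x y hxy => ?_⟩
  set I₁ := I.colon {y}
  set I₂ := I.colon I₁.carrier
  have hx : x ∈ I₁.carrier := fun _ hs => (Set.mem_singleton_iff.mp hs) ▸ hxy
  have hy : y ∈ I₂.carrier := fun a ha => H.comm y a ▸ ha y rfl
  have hprod : H.setMul I₁.carrier I₂.carrier ⊆ I.carrier :=
    MulHyperring.setMul_subset_iff.mpr fun a ha b hb => H.comm a b ▸ hb a ha
  exact (h I₁ I₂ hprod).imp (· hx) (· ⟨y, hy, rfl⟩)

end HyperPaper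

theorem stmt4_general {R : Type*} [AddCommGroup R] (H : MulHyperring R) (α : R → R)
    (I : Hyperideal H) (hproper : I.carrier ≠ Set.univ) :
    IsAlphaPrime H α I ↔
      ∀ I₁ I₂ : Hyperideal H, H.setMul I₁.carrier I₂.carrier ⊆ I.carrier →
        I₁.carrier ⊆ I.carrier ∨ α '' I₂.carrier ⊆ I.carrier :=
  ⟨IsAlphaPrime.setMul_subset_imp, isAlphaPrime_of_setMul_subset_imp hproper⟩

/-- A proper hyperideal `I` is `α`-prime iff for all hyperideals
`I₁, I₂`, `I₁ ∘ I₂ ⊆ I` implies `I₁ ⊆ I` or `α(I₂) ⊆ I`. -/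
theorem stmt4 {R : Type*} [AddCommGroup R] (H : MulHyperring R) (α : R → R)
    (hα : IsGoodEndo H α) (e : R) (he : ∀ a : R, a ∈ H.hmul a e)
    (I : Hyperideal H) (hproper : I.carrier ≠ Set.univ) :
    IsAlphaPrime H α I ↔
      ∀ I₁ I₂ : Hyperideal H, H.setMul I₁.carrier I₂.carrier ⊆ I.carrier →
        I₁.carrier ⊆ I.carrier ∨ α '' I₂.carrier ⊆ I.carrier :=
  stmt4_general H α I hproper
end

section
/- If R has identity element 1 (i.e., x ∈ 1∘x for all x ∈ R), I is an α-prime C-hyperideal of R, and xⁿ ⊆ I for some x ∈ R and n ∈ ℕ, then α(x) ∈ I. -/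
open Pointwise

open HyperPaper

lemma hpow_eq_hprod {R : Type*} [AddCommGroup R] (H : MulHyperring R) (a : R) (n : ℕ) :
    H.hpow a n = H.hprod a (List.replicate n a) := by
  induction n with
  | zero => rfl
  | succ n ih =>
    show H.setMul {a} (H.hpow a n) = H.hprod a (a :: List.replicate n a)
    rw [ih]; rfl

lemma hpow_nonempty {R : Type*} [AddCommGroup R] (H : MulHyperring R) (a : R) (n : ℕ) :
    (H.hpow a n).Nonempty := by
  induction n with
  | zero => exact ⟨a, rfl⟩
  | succ n ih =>
    obtain ⟨t, ht⟩ := ih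
    obtain ⟨u, hu⟩ := H.nonempty a t
    exact ⟨u, Set.mem_biUnion rfl (Set.mem_biUnion ht hu)⟩

/-- If `I` is an `α`-prime C-hyperideal of `R` with identity `1`
(`x ∈ 1∘x`) and `xⁿ ⊆ I`, then `α x ∈ I`. -/
theorem stmt6 {R : Type*} [AddCommGroup R] (H : MulHyperring R) (α : R → R)
    (hα : IsGoodEndo H α) (one : R) (hone : ∀ x : R, x ∈ H.hmul one x)
    (I : Hyperideal H) (hC : IsCHyperideal H I) (hp : IsAlphaPrime H α I)
    (x : R) (n : ℕ) (hx : H.hpow x n ⊆ I.carrier) :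
    α x ∈ I.carrier := by
  induction n with
  | zero =>
    have hxI : x ∈ I.carrier := hx rfl
    have h1 : H.hmul one x ⊆ I.carrier := I.absorb one x hxI
    rcases hp.2 one x h1 with h | h
    · exfalso
      apply hp.1
      ext y
      simp only [Set.mem_univ, iff_true]
      have := I.absorb y one h
      rw [← H.comm] at this
      exact this (hone y)
    · exact h
  | succ n ih =>
    obtain ⟨t, ht⟩ := hpow_nonempty H x n
    have hxt : H.hmul x t ⊆ I.carrier := by
      intro u hu
      exact hx (Set.mem_biUnion rfl (Set.mem_biUnion ht hu))
    rw [H.comm] at hxt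
    rcases hp.2 t x hxt with h | h
    · apply ih
      rw [hpow_eq_hprod] at ht ⊢
      exact hC x (List.replicate n x) ⟨t, ht, h⟩
    · exact h
end

section
/- If I is an α-prime C-hyperideal of R and (α(y))ⁿ ⊆ I for some y ∈ R and n ∈ ℕ, then α²(y) ∈ I. -/
open Pointwise

/-!
An `α`-prime C-hyperideal `I` satisfies `xⁿ ⊆ I → α x ∈ I`, by induction on `n`. For `n = 0`,
`x ∈ 1 ∘ x` meets `I`, so `1 ∘ x ⊆ I` by the C-property, and `1 ∉ I` forces `α x ∈ I`.
In the step, `x ∘ t ⊆ xⁿ⁺¹ ⊆ I` for some `t ∈ xⁿ`, so either `α x ∈ I` or `t ∈ I`; in the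
latter case `xⁿ` meets `I`, hence lies in `I` by the C-property. The theorem is the case
`x = α y`.
-/

namespace HyperPaper

variable {R : Type*} [AddCommGroup R] {H : MulHyperring R} {α : R → R} {I : Hyperideal H}

namespace MulHyperring

theorem hprod_singleton (H : MulHyperring R) (a b : R) : H.hprod a [b] = H.hmul a b := by
  simp [hprod, setMul]

theorem hpow_eq_hprod (H : MulHyperring R) (x : R) (n : ℕ) :
    H.hpow x n = H.hprod x (List.replicate n x) := by
  induction n with
  | zero => rfl
  | succ n ih => simp [hpow, hprod, List.replicate, ih]

theorem hmul_subset_hpow_succ {x t : R} {n : ℕ} (ht : t ∈ H.hpow x n) :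
    H.hmul x t ⊆ H.hpow x (n + 1) := fun s hs => by
  simp only [hpow, setMul, Set.mem_iUnion, Set.mem_singleton_iff]
  exact ⟨x, rfl, t, ht, hs⟩

theorem hpow_nonempty (H : MulHyperring R) (x : R) (n : ℕ) : (H.hpow x n).Nonempty := by
  induction n with
  | zero => exact ⟨x, rfl⟩
  | succ n ih =>
    obtain ⟨t, ht⟩ := ih
    obtain ⟨s, hs⟩ := H.nonempty x t
    exact ⟨s, hmul_subset_hpow_succ ht hs⟩

end MulHyperring

theorem Hyperideal.one_notMem {one : R} (hone : ∀ x : R, x ∈ H.hmul one x)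
    (hI : I.carrier ≠ Set.univ) : one ∉ I.carrier := fun h =>
  hI <| Set.eq_univ_of_forall fun r => I.absorb r one h (H.comm r one ▸ hone r)

namespace IsCHyperideal

theorem hmul_subset (hC : IsCHyperideal H I) {a b : R}
    (h : (H.hmul a b ∩ I.carrier).Nonempty) : H.hmul a b ⊆ I.carrier := by
  rw [← H.hprod_singleton] at h ⊢
  exact hC a [b] h

theorem hpow_subset (hC : IsCHyperideal H I) {x : R} {n : ℕ}
    (h : (H.hpow x n ∩ I.carrier).Nonempty) : H.hpow x n ⊆ I.carrier := by
  rw [H.hpow_eq_hprod] at h ⊢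
  exact hC x _ h

end IsCHyperideal

namespace IsAlphaPrime

theorem apply_mem (hp : IsAlphaPrime H α I) (hC : IsCHyperideal H I) {one : R}
    (hone : ∀ x : R, x ∈ H.hmul one x) {x : R} (hx : x ∈ I.carrier) : α x ∈ I.carrier :=
  (hp.2 one x (hC.hmul_subset ⟨x, hone x, hx⟩)).resolve_left (Hyperideal.one_notMem hone hp.1)

theorem apply_mem_of_hpow_subset (hp : IsAlphaPrime H α I) (hC : IsCHyperideal H I) {one : R}
    (hone : ∀ x : R, x ∈ H.hmul one x) {x : R} {n : ℕ} (hx : H.hpow x n ⊆ I.carrier) :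
    α x ∈ I.carrier := by
  induction n with
  | zero => exact hp.apply_mem hC hone (hx rfl)
  | succ n ih =>
    obtain ⟨t, ht⟩ := H.hpow_nonempty x n
    have htx : H.hmul t x ⊆ I.carrier :=
      H.comm t x ▸ (MulHyperring.hmul_subset_hpow_succ ht).trans hx
    exact (hp.2 t x htx).elim (fun htI => ih (hC.hpow_subset ⟨t, ht, htI⟩)) id

end IsAlphaPrime

end HyperPaper

open HyperPaper

theorem stmt7_general {R : Type*} [AddCommGroup R] (H : MulHyperring R) (α : R → R)
    (one : R) (hone : ∀ x : R, x ∈ H.hmul one x)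
    (I : Hyperideal H) (hC : IsCHyperideal H I) (hp : IsAlphaPrime H α I)
    (y : R) (n : ℕ) (hy : H.hpow (α y) n ⊆ I.carrier) :
    α (α y) ∈ I.carrier :=
  hp.apply_mem_of_hpow_subset hC hone hy

/-- If `I` is an `α`-prime C-hyperideal and `(α y)ⁿ ⊆ I`, then
`α² y ∈ I`. -/
theorem stmt7 {R : Type*} [AddCommGroup R] (H : MulHyperring R) (α : R → R)
    (hα : IsGoodEndo H α) (one : R) (hone : ∀ x : R, x ∈ H.hmul one x)
    (I : Hyperideal H) (hC : IsCHyperideal H I) (hp : IsAlphaPrime H α I)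
    (y : R) (n : ℕ) (hy : H.hpow (α y) n ⊆ I.carrier) :
    α (α y) ∈ I.carrier :=
  stmt7_general H α one hone I hC hp y n hy
end

section
/- Let f : R₁ → R₂ be a good homomorphism of multiplicative hyperrings and α an endomorphism of both R₁ and R₂ with α∘f = f∘α. If I₂ is an α-prime hyperideal of R₂, then f⁻¹(I₂) is an α-prime hyperideal of R₁. -/
open Pointwise

open HyperPaper

namespace HyperPaper

variable {R₁ R₂ : Type*} [AddCommGroup R₁] [AddCommGroup R₂]
  {H₁ : MulHyperring R₁} {H₂ : MulHyperring R₂} {f : R₁ → R₂}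

theorem IsGoodHom.map_zero (hf : IsGoodHom H₁ H₂ f) : f 0 = 0 :=
  _root_.map_zero (AddMonoidHom.mk' f hf.1)

theorem IsGoodHom.map_sub (hf : IsGoodHom H₁ H₂ f) (a b : R₁) : f (a - b) = f a - f b :=
  _root_.map_sub (AddMonoidHom.mk' f hf.1) a b

theorem IsGoodHom.map_mem_hmul (hf : IsGoodHom H₁ H₂ f) {x y z : R₁} (hz : z ∈ H₁.hmul x y) :
    f z ∈ H₂.hmul (f x) (f y) :=
  hf.2 x y ▸ Set.mem_image_of_mem f hz

theorem IsGoodHom.hmul_subset_iff (hf : IsGoodHom H₁ H₂ f) (x y : R₁) (S : Set R₂) :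
    H₂.hmul (f x) (f y) ⊆ S ↔ H₁.hmul x y ⊆ f ⁻¹' S := by
  rw [← hf.2, Set.image_subset_iff]

def Hyperideal.comap (hf : IsGoodHom H₁ H₂ f) (I : Hyperideal H₂) : Hyperideal H₁ where
  carrier := f ⁻¹' I.carrier
  zero_mem := by
    simpa only [Set.mem_preimage, hf.map_zero] using I.zero_mem
  sub_mem a b ha hb := by
    simpa only [Set.mem_preimage, hf.map_sub] using I.sub_mem _ _ ha hb
  absorb r x hx _ hy := I.absorb (f r) (f x) hx (hf.map_mem_hmul hy)

theorem IsAlphaPrime.comap (hf : IsGoodHom H₁ H₂ f) {α₁ : R₁ → R₁} {α₂ : R₂ → R₂}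
    (hcomm : ∀ r, α₂ (f r) = f (α₁ r)) {I : Hyperideal H₂} (hI : IsAlphaPrime H₂ α₂ I)
    (hproper : f ⁻¹' I.carrier ≠ Set.univ) : IsAlphaPrime H₁ α₁ (I.comap hf) := by
  refine ⟨hproper, fun x y hxy => ?_⟩
  have := hI.2 (f x) (f y) ((hf.hmul_subset_iff x y _).2 hxy)
  rwa [hcomm] at this

end HyperPaper

theorem stmt9_general {R₁ R₂ : Type*} [AddCommGroup R₁] [AddCommGroup R₂]
    (H₁ : MulHyperring R₁) (H₂ : MulHyperring R₂) (f : R₁ → R₂)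
    (hf : IsGoodHom H₁ H₂ f) (α₁ : R₁ → R₁) (α₂ : R₂ → R₂)
    (hcomm : ∀ r : R₁, α₂ (f r) = f (α₁ r))
    (I₂ : Hyperideal H₂) (hp : IsAlphaPrime H₂ α₂ I₂)
    (hproper : f ⁻¹' I₂.carrier ≠ Set.univ) :
    ∃ J : Hyperideal H₁, J.carrier = f ⁻¹' I₂.carrier ∧ IsAlphaPrime H₁ α₁ J :=
  ⟨I₂.comap hf, rfl, hp.comap hf hcomm hproper⟩

/-- Preimage of an `α`-prime hyperideal under a good homomorphism
commuting with `α` is `α`-prime. -/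
theorem stmt9 {R₁ R₂ : Type*} [AddCommGroup R₁] [AddCommGroup R₂]
    (H₁ : MulHyperring R₁) (H₂ : MulHyperring R₂) (f : R₁ → R₂)
    (hf : IsGoodHom H₁ H₂ f) (α₁ : R₁ → R₁) (α₂ : R₂ → R₂)
    (hα₁ : IsGoodEndo H₁ α₁) (hα₂ : IsGoodEndo H₂ α₂)
    (hcomm : ∀ r : R₁, α₂ (f r) = f (α₁ r))
    (I₂ : Hyperideal H₂) (hp : IsAlphaPrime H₂ α₂ I₂)
    (hproper : f ⁻¹' I₂.carrier ≠ Set.univ) :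
    ∃ J : Hyperideal H₁, J.carrier = f ⁻¹' I₂.carrier ∧ IsAlphaPrime H₁ α₁ J :=
  stmt9_general H₁ H₂ f hf α₁ α₂ hcomm I₂ hp hproper
end

section
/- Let f : R₁ → R₂ be a good homomorphism and α an endomorphism of both R₁ and R₂ commuting with f. Then (1) f(ᵅ√I₁) ⊆ ᵅ√(f(I₁)) for a hyperideal I₁ of R₁ (where f(I₁) is contained in some hyperideal of R₂), and (2) ᵅ√(f⁻¹(I₂)) ⊆ f⁻¹(ᵅ√I₂) for a hyperideal I₂ of R₂. -/
open Pointwise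

namespace HyperPaper

variable {R : Type*} [AddCommGroup R]

variable {R₁ R₂ : Type*} [AddCommGroup R₁] [AddCommGroup R₂]
  {H₁ : MulHyperring R₁} {H₂ : MulHyperring R₂} {f : R₁ → R₂}

theorem IsGoodHom.image_setMul (hf : IsGoodHom H₁ H₂ f) (A B : Set R₁) :
    f '' H₁.setMul A B = H₂.setMul (f '' A) (f '' B) := by
  simp only [MulHyperring.setMul, Set.image_iUnion₂, Set.biUnion_image, hf.2]

theorem IsGoodHom.image_hpow (hf : IsGoodHom H₁ H₂ f) (a : R₁) (n : ℕ) :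
    f '' H₁.hpow a n = H₂.hpow (f a) n := by
  induction n with
  | zero => simp [MulHyperring.hpow]
  | succ n ih =>
    rw [MulHyperring.hpow, MulHyperring.hpow, hf.image_setMul, ih, Set.image_singleton]

variable {α₁ : R₁ → R₁} {α₂ : R₂ → R₂}

theorem IsGoodHom.image_alpha_hpow (hf : IsGoodHom H₁ H₂ f)
    (hcomm : ∀ r, α₂ (f r) = f (α₁ r)) (r : R₁) (n : ℕ) :
    α₂ '' H₂.hpow (f r) n = f '' (α₁ '' H₁.hpow r n) := by
  rw [← hf.image_hpow, Set.image_image, Set.image_image]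
  simp only [hcomm]

theorem IsGoodHom.image_alphaRad_subset (hf : IsGoodHom H₁ H₂ f)
    (hcomm : ∀ r, α₂ (f r) = f (α₁ r)) (S : Set R₁) :
    f '' alphaRad H₁ α₁ S ⊆ alphaRad H₂ α₂ (f '' S) := by
  rintro _ ⟨r, ⟨n, hn⟩, rfl⟩
  exact ⟨n, hf.image_alpha_hpow hcomm r n ▸ Set.image_mono hn⟩

theorem IsGoodHom.alphaRad_preimage_subset (hf : IsGoodHom H₁ H₂ f)
    (hcomm : ∀ r, α₂ (f r) = f (α₁ r)) (T : Set R₂) :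
    alphaRad H₁ α₁ (f ⁻¹' T) ⊆ f ⁻¹' alphaRad H₂ α₂ T := by
  rintro r ⟨n, hn⟩
  exact ⟨n, hf.image_alpha_hpow hcomm r n ▸ Set.image_subset_iff.2 hn⟩

end HyperPaper

open HyperPaper

theorem stmt16_general {R₁ R₂ : Type*} [AddCommGroup R₁] [AddCommGroup R₂]
    (H₁ : MulHyperring R₁) (H₂ : MulHyperring R₂) (f : R₁ → R₂)
    (hf : IsGoodHom H₁ H₂ f) (α₁ : R₁ → R₁) (α₂ : R₂ → R₂)
    (hcomm : ∀ r : R₁, α₂ (f r) = f (α₁ r))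
    (I₁ : Hyperideal H₁) (I₂ : Hyperideal H₂) :
    f '' alphaRad H₁ α₁ I₁.carrier ⊆ alphaRad H₂ α₂ (f '' I₁.carrier) ∧
      alphaRad H₁ α₁ (f ⁻¹' I₂.carrier) ⊆ f ⁻¹' (alphaRad H₂ α₂ I₂.carrier) :=
  ⟨hf.image_alphaRad_subset hcomm I₁.carrier, hf.alphaRad_preimage_subset hcomm I₂.carrier⟩

/-- For a good homomorphism `f` commuting with `α`:
`f(ᵅ√I₁) ⊆ ᵅ√(f(I₁))` and `ᵅ√(f⁻¹(I₂)) ⊆ f⁻¹(ᵅ√I₂)`. -/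
theorem stmt16 {R₁ R₂ : Type*} [AddCommGroup R₁] [AddCommGroup R₂]
    (H₁ : MulHyperring R₁) (H₂ : MulHyperring R₂) (f : R₁ → R₂)
    (hf : IsGoodHom H₁ H₂ f) (α₁ : R₁ → R₁) (α₂ : R₂ → R₂)
    (hα₁ : IsGoodEndo H₁ α₁) (hα₂ : IsGoodEndo H₂ α₂)
    (hcomm : ∀ r : R₁, α₂ (f r) = f (α₁ r))
    (I₁ : Hyperideal H₁) (I₂ : Hyperideal H₂) :
    f '' alphaRad H₁ α₁ I₁.carrier ⊆ alphaRad H₂ α₂ (f '' I₁.carrier) ∧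
      alphaRad H₁ α₁ (f ⁻¹' I₂.carrier) ⊆ f ⁻¹' (alphaRad H₂ α₂ I₂.carrier) :=
  stmt16_general H₁ H₂ f hf α₁ α₂ hcomm I₁ I₂
end

section
/- Let f : R₁ → R₂ be a good epimorphism of multiplicative hyperrings, α an endomorphism of both commuting with f, and I₁ a C-hyperideal of R₁ containing Ker f. Then I₁ is an α-prime hyperideal of R₁ if and only if f(I₁) is an α-prime hyperideal of R₂. -/
/-! Because `I₁` is an additive subgroup containing `Ker f`, it is saturated: `f⁻¹(f(I₁)) = I₁`.
As `f` is surjective and good, `f x ∘ f y = f(x ∘ y)` lies in `f(I₁)` exactly when `x ∘ y ⊆ I₁`,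
and `α(f y) = f(α y)`, so both properness and the `α`-prime condition transfer along `f`. -/

open Pointwise

namespace HyperPaper

variable {R R₁ R₂ : Type*} [AddCommGroup R] [AddCommGroup R₁] [AddCommGroup R₂]
  {H : MulHyperring R} {H₁ : MulHyperring R₁} {H₂ : MulHyperring R₂}

def Hyperideal.toAddSubgroup (I : Hyperideal H) : AddSubgroup R :=
  AddSubgroup.ofSub I.carrier ⟨0, I.zero_mem⟩ fun a ha b hb => by
    simpa [sub_eq_add_neg] using I.sub_mem a b ha hb

theorem Hyperideal.preimage_image_eq {I : Hyperideal H} {f : R →+ R₂}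
    (hker : f ⁻¹' {0} ⊆ I.carrier) : f ⁻¹' (f '' I.carrier) = I.carrier := by
  have h := AddSubgroup.comap_map_eq_self (f := f) (H := I.toAddSubgroup) fun x hx => hker hx
  exact congrArg SetLike.coe h

theorem hmul_subset_iff_of_preimage_eq {f : R₁ → R₂}
    (hmul : ∀ x y, f '' H₁.hmul x y = H₂.hmul (f x) (f y))
    {I : Hyperideal H₁} {J : Hyperideal H₂} (hIJ : f ⁻¹' J.carrier = I.carrier) (x y : R₁) :
    H₂.hmul (f x) (f y) ⊆ J.carrier ↔ H₁.hmul x y ⊆ I.carrier := by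
  rw [← hmul, Set.image_subset_iff, hIJ]

theorem isAlphaPrime_iff_of_preimage_eq {f : R₁ → R₂}
    (hmul : ∀ x y, f '' H₁.hmul x y = H₂.hmul (f x) (f y)) (hsurj : Function.Surjective f)
    {α₁ : R₁ → R₁} {α₂ : R₂ → R₂} (hcomm : ∀ r, α₂ (f r) = f (α₁ r))
    {I : Hyperideal H₁} {J : Hyperideal H₂} (hIJ : f ⁻¹' J.carrier = I.carrier) :
    IsAlphaPrime H₁ α₁ I ↔ IsAlphaPrime H₂ α₂ J := by
  have hmem : ∀ x, f x ∈ J.carrier ↔ x ∈ I.carrier := fun x => by rw [← hIJ, Set.mem_preimage]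
  have hproper : I.carrier = Set.univ ↔ J.carrier = Set.univ := by
    rw [← hIJ, ← Set.preimage_univ (f := f), hsurj.preimage_injective.eq_iff]
  unfold IsAlphaPrime
  rw [hsurj.forall₂, Ne, Ne, hproper]
  simp only [hmul_subset_iff_of_preimage_eq hmul hIJ, hcomm, hmem]

end HyperPaper

open HyperPaper

theorem stmt18_general {R₁ R₂ : Type*} [AddCommGroup R₁] [AddCommGroup R₂]
    (H₁ : MulHyperring R₁) (H₂ : MulHyperring R₂) (f : R₁ → R₂)
    (hf : IsGoodHom H₁ H₂ f) (hsurj : Function.Surjective f)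
    (α₁ : R₁ → R₁) (α₂ : R₂ → R₂)
    (hcomm : ∀ r : R₁, α₂ (f r) = f (α₁ r))
    (Z₂ : Hyperideal H₂)
    (I₁ : Hyperideal H₁)
    (hker : f ⁻¹' Z₂.carrier ⊆ I₁.carrier)
    (J : Hyperideal H₂) (hJ : J.carrier = f '' I₁.carrier) :
    IsAlphaPrime H₁ α₁ I₁ ↔ IsAlphaPrime H₂ α₂ J := by
  obtain ⟨hadd, hmul⟩ := hf
  let φ : R₁ →+ R₂ := AddMonoidHom.mk' f hadd
  have hker₀ : φ ⁻¹' {0} ⊆ I₁.carrier :=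
    (Set.preimage_mono (Set.singleton_subset_iff.2 Z₂.zero_mem)).trans hker
  refine isAlphaPrime_iff_of_preimage_eq hmul hsurj hcomm ?_
  rw [hJ]
  exact Hyperideal.preimage_image_eq hker₀

/-- For a good epimorphism `f` commuting with `α` and a C-hyperideal
`I₁ ⊇ Ker f`, `I₁` is `α`-prime iff `f(I₁)` is `α`-prime. -/
theorem stmt18 {R₁ R₂ : Type*} [AddCommGroup R₁] [AddCommGroup R₂]
    (H₁ : MulHyperring R₁) (H₂ : MulHyperring R₂) (f : R₁ → R₂)
    (hf : IsGoodHom H₁ H₂ f) (hsurj : Function.Surjective f)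
    (α₁ : R₁ → R₁) (α₂ : R₂ → R₂)
    (hα₁ : IsGoodEndo H₁ α₁) (hα₂ : IsGoodEndo H₂ α₂)
    (hcomm : ∀ r : R₁, α₂ (f r) = f (α₁ r))
    (Z₂ : Hyperideal H₂) (hZ₂ : ∀ J : Hyperideal H₂, Z₂.carrier ⊆ J.carrier)
    (I₁ : Hyperideal H₁) (hC : IsCHyperideal H₁ I₁)
    (hker : f ⁻¹' Z₂.carrier ⊆ I₁.carrier)
    (J : Hyperideal H₂) (hJ : J.carrier = f '' I₁.carrier) :
    IsAlphaPrime H₁ α₁ I₁ ↔ IsAlphaPrime H₂ α₂ J :=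
  stmt18_general H₁ H₂ f hf hsurj α₁ α₂ hcomm Z₂ I₁ hker J hJ
end

section
/- Let R₁, R₂ be multiplicative hyperrings with identity, α₁ ∈ End(R₁), α₂ ∈ End(R₂), and let ᾱ(r₁,r₂) = (α₁(r₁), α₂(r₂)) on the product hyperring R₁ × R₂. A hyperideal I₁ of R₁ is α₁-prime if and only if I₁ × R₂ is an ᾱ-prime hyperideal of R₁ × R₂. -/
open Pointwise

namespace HyperPaper

variable {R : Type*} [AddCommGroup R]

theorem hmul_subset_prod_univ_iff {R₁ R₂ : Type*} [AddCommGroup R₁] [AddCommGroup R₂]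
    {H₁ : MulHyperring R₁} {H₂ : MulHyperring R₂} {H : MulHyperring (R₁ × R₂)}
    (hH : ∀ p q : R₁ × R₂,
      H.hmul p q = {x : R₁ × R₂ | x.1 ∈ H₁.hmul p.1 q.1 ∧ x.2 ∈ H₂.hmul p.2 q.2})
    (S : Set R₁) (p q : R₁ × R₂) :
    H.hmul p q ⊆ S ×ˢ Set.univ ↔ H₁.hmul p.1 q.1 ⊆ S := by
  rw [hH]
  refine ⟨fun h a ha => ?_, fun h x hx => ⟨h hx.1, trivial⟩⟩
  obtain ⟨b, hb⟩ := H₂.nonempty p.2 q.2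
  exact (h (show (a, b) ∈ _ from ⟨ha, hb⟩)).1

end HyperPaper

open HyperPaper

theorem stmt19_general {R₁ R₂ : Type*} [AddCommGroup R₁] [AddCommGroup R₂]
    (H₁ : MulHyperring R₁) (H₂ : MulHyperring R₂)
    (α₁ : R₁ → R₁) (α₂ : R₂ → R₂)
    (H : MulHyperring (R₁ × R₂))
    (hH : ∀ p q : R₁ × R₂,
      H.hmul p q = {x : R₁ × R₂ | x.1 ∈ H₁.hmul p.1 q.1 ∧ x.2 ∈ H₂.hmul p.2 q.2})
    (I₁ : Hyperideal H₁) (J : Hyperideal H)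
    (hJ : J.carrier = I₁.carrier ×ˢ (Set.univ : Set R₂)) :
    IsAlphaPrime H₁ α₁ I₁ ↔
      IsAlphaPrime H (fun p : R₁ × R₂ => (α₁ p.1, α₂ p.2)) J := by
  simp only [IsAlphaPrime, hJ, ne_eq, hmul_subset_prod_univ_iff hH, Set.prod_eq_univ, Set.mem_prod,
    Set.mem_univ, and_true, Prod.forall, forall_const]

/-- `I₁` is `α₁`-prime in `R₁` iff `I₁ × R₂` is `ᾱ`-prime in the
product hyperring `R₁ × R₂`, where `ᾱ(r₁, r₂) = (α₁ r₁, α₂ r₂)`. -/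
theorem stmt19 {R₁ R₂ : Type*} [AddCommGroup R₁] [AddCommGroup R₂]
    (H₁ : MulHyperring R₁) (H₂ : MulHyperring R₂)
    (α₁ : R₁ → R₁) (α₂ : R₂ → R₂)
    (hα₁ : IsGoodEndo H₁ α₁) (hα₂ : IsGoodEndo H₂ α₂)
    (one₁ : R₁) (hone₁ : ∀ x : R₁, x ∈ H₁.hmul one₁ x) (h1ne₁ : one₁ ≠ 0)
    (one₂ : R₂) (hone₂ : ∀ x : R₂, x ∈ H₂.hmul one₂ x) (h1ne₂ : one₂ ≠ 0)
    (H : MulHyperring (R₁ × R₂))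
    (hH : ∀ p q : R₁ × R₂,
      H.hmul p q = {x : R₁ × R₂ | x.1 ∈ H₁.hmul p.1 q.1 ∧ x.2 ∈ H₂.hmul p.2 q.2})
    (I₁ : Hyperideal H₁) (J : Hyperideal H)
    (hJ : J.carrier = I₁.carrier ×ˢ (Set.univ : Set R₂)) :
    IsAlphaPrime H₁ α₁ I₁ ↔
      IsAlphaPrime H (fun p : R₁ × R₂ => (α₁ p.1, α₂ p.2)) J :=
  stmt19_general H₁ H₂ α₁ α₂ H hH I₁ J hJ
end
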